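/- arXiv:2011.12038 — 3 statements merged into one kernel-verified Lean document; each statement's English description precedes it below -/
import Mathlib

section
/- Let Γ be a strongly connected digraph of order n ≥ 2. Then dim(Γ) = n − 1 if and only if Γ is a complete digraph (i.e., for every pair of distinct vertices x, y both arcs (x,y) and (y,x) are present). -/
/-!  Common definitions for weak metric dimension of digraphs.

A digraph is modelled by a vertex type `V` together with an arc relation
`A : V → V → Prop` (simplicity is expressed by `Irreflexive A`). -/

/-- There is a directed walk of length `n` from `x` to `y`. -/
def walkLen {V : Type*} (A : V → V → Prop) : ℕ → V → V → Prop
  | 0 => fun x y => x = y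
  | n + 1 => fun x y => ∃ z, A x z ∧ walkLen A n z y

/-- `∂(x,y)`: the length of a shortest directed path from `x` to `y`. -/
noncomputable def ddist {V : Type*} (A : V → V → Prop) (x y : V) : ℕ :=
  sInf {n | walkLen A n x y}

/-- The two way distance `∂̃(x,y) = (∂(x,y), ∂(y,x))`. -/
noncomputable def twoDist {V : Type*} (A : V → V → Prop) (x y : V) : ℕ × ℕ :=
  (ddist A x y, ddist A y x)

/-- Strong connectivity: any vertex can be reached from any vertex by a directed walk. -/
def IsStronglyConnected {V : Type*} (A : V → V → Prop) : Prop :=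
  ∀ x y : V, ∃ n, walkLen A n x y

/-- `S` is a weakly resolving set: distinct vertices have different tuples of
two way distances from the vertices of `S`. -/
def IsWeaklyResolving {V : Type*} (A : V → V → Prop) (S : Set V) : Prop :=
  ∀ u v : V, (∀ w ∈ S, twoDist A w u = twoDist A w v) → u = v

/-- The weak metric dimension: minimum cardinality of a weakly resolving set. -/
noncomputable def wdim {V : Type*} [Fintype V] (A : V → V → Prop) : ℕ :=
  sInf {k | ∃ S : Finset V, S.card = k ∧ IsWeaklyResolving A ↑S}

/-- The diameter: the maximum of `∂(x,y)` over all ordered pairs of vertices. -/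
noncomputable def diam {V : Type*} [Fintype V] (A : V → V → Prop) : ℕ :=
  sSup {m | ∃ x y : V, ddist A x y = m}

/-- `f(n,d)`: the least positive integer `k` with `k + d^(2k) ≥ n`. -/
noncomputable def fnd (n d : ℕ) : ℕ :=
  sInf {k | 0 < k ∧ n ≤ k + d ^ (2 * k)}

/-- An isomorphism from `(V, A)` onto `(W, B)` exists. -/
def IsIsoTo {V W : Type*} (A : V → V → Prop) (B : W → W → Prop) : Prop :=
  ∃ e : V ≃ W, ∀ x y, A x y ↔ B (e x) (e y)

/-- The digraph of Example 2.3: vertices `v_1, …, v_n` are the elements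
`0, …, n-1` of `Fin n` (so `v_i` is `i - 1`). -/
def egArc (n d : ℕ) : Fin n → Fin n → Prop := fun x y =>
  (x.val = n - 1 ∧ y.val ≤ n - d) ∨
  (x.val ≤ n - d ∧ y.val = n - d + 1) ∨
  (n - d + 1 ≤ x.val ∧ x.val ≤ n - 2 ∧ y.val = x.val + 1)

/-- The `r`-th (0-based) coordinate of the tuple `v_{j+1}` in Construction 2.4;
it lies in `{1, …, d}` and `j = Σ_r (coord r - 1) d^r`. -/
def gcoord (d j r : ℕ) : ℕ := j / d ^ r % d + 1

/-- The arc relation of Construction 2.4, with the `u`-vertices `Fin k` on the left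
and the `v`-vertices `Fin m` on the right of the sum. -/
def gammaArcKM (d k : ℕ) {m : ℕ} : Fin k ⊕ Fin m → Fin k ⊕ Fin m → Prop
  | .inl _, .inl _ => False
  | .inl i, .inr j => gcoord d j.val (2 * i.val) = 1
  | .inr j, .inl i => gcoord d j.val (2 * i.val + 1) = 1
  | .inr j, .inr l => j ≠ l ∧ ∀ r < k,
      gcoord d l.val (2 * r) ≤ gcoord d j.val (2 * r) + 1 ∧
      gcoord d j.val (2 * r + 1) ≤ gcoord d l.val (2 * r + 1) + 1

/-- The arc relation of `Γ̄`: `Γ` of Construction 2.4 together with symmetric arcs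
between any two distinct `u`-vertices. -/
def gammaBarArcKM (d k : ℕ) {m : ℕ} : Fin k ⊕ Fin m → Fin k ⊕ Fin m → Prop
  | .inl i, .inl i' => i ≠ i'
  | x, y => gammaArcKM d k x y

/-- The directed cycle of length `m` on `Fin m`. -/
def cycArc (m : ℕ) [NeZero m] : Fin m → Fin m → Prop := fun x y => y = x + 1

/-- `σ` is an automorphism of the digraph `(V, A)`. -/
def IsDigraphAuto {V : Type*} (A : V → V → Prop) (σ : V ≃ V) : Prop :=
  ∀ a b, A a b ↔ A (σ a) (σ b)

/-- Vertex-transitivity. -/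
def IsVertexTransitive {V : Type*} (A : V → V → Prop) : Prop :=
  ∀ x y : V, ∃ σ : V ≃ V, IsDigraphAuto A σ ∧ σ x = y

/-- Weak distance-transitivity. -/
def IsWeaklyDistanceTransitive {V : Type*} (A : V → V → Prop) : Prop :=
  ∀ x y x' y' : V, twoDist A x y = twoDist A x' y' →
    ∃ σ : V ≃ V, IsDigraphAuto A σ ∧ σ x = x' ∧ σ y = y'

/-- Weak distance-regularity. -/
noncomputable def IsWeaklyDistanceRegular {V : Type*} (A : V → V → Prop) : Prop :=
  ∀ i j : ℕ × ℕ, (∃ a b : V, twoDist A a b = i) → (∃ a b : V, twoDist A a b = j) →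
    ∀ x y x' y' : V, twoDist A x y = twoDist A x' y' →
      Set.ncard {z : V | twoDist A x z = i ∧ twoDist A z y = j} =
      Set.ncard {z : V | twoDist A x' z = i ∧ twoDist A z y' = j}

/-- The complete digraph `K_t`. -/
def Krel (t : ℕ) : Fin t → Fin t → Prop := fun x y => x ≠ y

/-- The null digraph `K̄_t`. -/
def Nrel (t : ℕ) : Fin t → Fin t → Prop := fun _ _ => False

/-- The directed path `P_2` of length `1`. -/
def P2rel : Fin 2 → Fin 2 → Prop := fun x y => x = 0 ∧ y = 1

/-- The digraph `G_1` on `{0,1,2}` with arcs `(0,1),(1,2),(2,1),(2,0)`. -/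
def G1rel : Fin 3 → Fin 3 → Prop := fun x y =>
  (x = 0 ∧ y = 1) ∨ (x = 1 ∧ y = 2) ∨ (x = 2 ∧ y = 1) ∨ (x = 2 ∧ y = 0)

/-- The digraph `G_2` on `{0,1,2}` with arcs `(0,1),(1,0),(1,2),(2,1),(2,0)`. -/
def G2rel : Fin 3 → Fin 3 → Prop := fun x y =>
  (x = 0 ∧ y = 1) ∨ (x = 1 ∧ y = 0) ∨ (x = 1 ∧ y = 2) ∨ (x = 2 ∧ y = 1) ∨ (x = 2 ∧ y = 0)

/-- The generalized lexicographic product `G[H₀, H₁, H₂]` for a digraph `G` on `{0,1,2}`. -/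
def glex3 {α β γ : Type*} (G : Fin 3 → Fin 3 → Prop)
    (H0 : α → α → Prop) (H1 : β → β → Prop) (H2 : γ → γ → Prop) :
    α ⊕ β ⊕ γ → α ⊕ β ⊕ γ → Prop
  | .inl x, .inl y => H0 x y
  | .inl _, .inr (.inl _) => G 0 1
  | .inl _, .inr (.inr _) => G 0 2
  | .inr (.inl _), .inl _ => G 1 0
  | .inr (.inl x), .inr (.inl y) => H1 x y
  | .inr (.inl _), .inr (.inr _) => G 1 2
  | .inr (.inr _), .inl _ => G 2 0
  | .inr (.inr _), .inr (.inl _) => G 2 1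
  | .inr (.inr x), .inr (.inr y) => H2 x y

/-- A clique in a digraph: the two way distance between any two distinct
vertices of `S` is `(1,1)`. -/
noncomputable def DClique {V : Type*} (A : V → V → Prop) (S : Set V) : Prop :=
  ∀ u ∈ S, ∀ v ∈ S, u ≠ v → twoDist A u v = (1, 1)

/-- An independent set in a digraph: no arcs inside `R`. -/
def DIndependent {V : Type*} (A : V → V → Prop) (R : Set V) : Prop :=
  ∀ u ∈ R, ∀ v ∈ R, ¬ A u v

/-!
A vertex `w ∈ S` is told apart from every other vertex by its own two way distance `(0,0)`, so
`S` is weakly resolving as soon as it separates the pairs of vertices outside `S`. Hence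
`dim(Γ) = n - 1` exactly when no set `V ∖ {u, v}` is weakly resolving, i.e. when any two
vertices `u, v` are twins: every third vertex sees them at the same two way distance.
In a complete digraph all two way distances between distinct vertices are `(1,1)`, so all pairs
are twins. Conversely, if all pairs are twins and `a ≠ b`, pick an out-neighbour `z ≠ a` of `a`;
then `∂(a,b) = ∂(a,z) = 1`, so `(a,b)` is an arc.
-/

section

variable {V : Type*} {A : V → V → Prop}

section Distance

variable {x y : V}

lemma walkLen_one_iff : walkLen A 1 x y ↔ A x y :=
  ⟨fun ⟨_, hxz, hzy⟩ => (show _ = y from hzy) ▸ hxz, fun h => ⟨y, h, rfl⟩⟩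

lemma ddist_self (x : V) : ddist A x x = 0 :=
  Nat.sInf_eq_zero.mpr (Or.inl rfl)

lemma walkLen_ddist (hxy : ∃ n, walkLen A n x y) : walkLen A (ddist A x y) x y :=
  Nat.sInf_mem hxy

lemma ddist_eq_zero_iff (hxy : ∃ n, walkLen A n x y) : ddist A x y = 0 ↔ x = y := by
  refine ⟨fun h => ?_, fun h => h ▸ ddist_self x⟩
  simpa [h, walkLen] using walkLen_ddist hxy

lemma ddist_eq_one_iff : ddist A x y = 1 ↔ A x y ∧ x ≠ y := by
  constructor
  · intro h
    have hwalk : walkLen A 1 x y := h ▸ Nat.sInf_mem (Nat.nonempty_of_sInf_eq_succ h)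
    refine ⟨walkLen_one_iff.mp hwalk, ?_⟩
    rintro rfl
    simp [ddist_self] at h
  · rintro ⟨hxy, hne⟩
    have hle : ddist A x y ≤ 1 := Nat.sInf_le (walkLen_one_iff.mpr hxy)
    have hpos : ddist A x y ≠ 0 :=
      fun h => hne ((ddist_eq_zero_iff ⟨1, walkLen_one_iff.mpr hxy⟩).mp h)
    omega

lemma eq_of_twoDist_self_eq (hxy : ∃ n, walkLen A n x y) (h : twoDist A x x = twoDist A x y) :
    x = y :=
  (ddist_eq_zero_iff hxy).mp (by simpa [twoDist, ddist_self] using (congrArg Prod.fst h).symm)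

/-- The first step of a shortest walk from `x` to `y ≠ x` cannot be a loop. -/
lemma exists_ddist_eq_one (hxy : ∃ n, walkLen A n x y) (hne : x ≠ y) :
    ∃ z, ddist A x z = 1 := by
  obtain ⟨m, hm⟩ := Nat.exists_eq_add_one_of_ne_zero
    (mt (ddist_eq_zero_iff hxy).mp hne)
  obtain ⟨z, hxz, hzy⟩ : walkLen A (m + 1) x y := hm ▸ walkLen_ddist hxy
  refine ⟨z, ddist_eq_one_iff.mpr ⟨hxz, ?_⟩⟩
  rintro rfl
  exact Nat.notMem_of_lt_sInf (show m < ddist A x y by omega) hzy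

end Distance

section Resolving

variable {S : Set V}

lemma isWeaklyResolving_iff (hsc : IsStronglyConnected A) :
    IsWeaklyResolving A S ↔ ∀ u v, u ∉ S → v ∉ S →
      (∀ w ∈ S, twoDist A w u = twoDist A w v) → u = v := by
  refine ⟨fun h u v _ _ => h u v, fun h u v huv => ?_⟩
  by_cases hu : u ∈ S
  · exact eq_of_twoDist_self_eq (hsc u v) (huv u hu)
  by_cases hv : v ∈ S
  · exact (eq_of_twoDist_self_eq (hsc v u) (huv v hv).symm).symm
  exact h u v hu hv huv

def AreTwins (A : V → V → Prop) (u v : V) : Prop :=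
  ∀ w, w ≠ u → w ≠ v → twoDist A w u = twoDist A w v

lemma AreTwins.mem_or_mem {u v : V} (h : AreTwins A u v) (hres : IsWeaklyResolving A S)
    (hne : u ≠ v) : u ∈ S ∨ v ∈ S := by
  by_contra! hout
  exact hne (hres u v fun w hw => h w (ne_of_mem_of_not_mem hw hout.1)
    (ne_of_mem_of_not_mem hw hout.2))

variable [Fintype V] [DecidableEq V]

lemma isWeaklyResolving_compl_pair (hsc : IsStronglyConnected A) {u v : V}
    (h : ¬ AreTwins A u v) : IsWeaklyResolving A ↑({u, v}ᶜ : Finset V) := by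
  rw [isWeaklyResolving_iff hsc]
  intro x y hx hy hxy
  have hseen : ∀ w, w ≠ u → w ≠ v → twoDist A w x = twoDist A w y :=
    fun w hwu hwv => hxy w (by simp [hwu, hwv])
  simp only [Finset.coe_compl, Finset.coe_insert, Finset.coe_singleton, Set.mem_compl_iff,
    Set.mem_insert_iff, Set.mem_singleton_iff, not_not] at hx hy
  rcases hx with rfl | rfl <;> rcases hy with rfl | rfl
  · rfl
  · exact absurd hseen h
  · exact absurd (fun w h₁ h₂ => (hseen w h₁ h₂).symm) h
  · rfl

lemma isWeaklyResolving_compl_singleton (hsc : IsStronglyConnected A) (x : V) :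
    IsWeaklyResolving A ↑({x}ᶜ : Finset V) := by
  rw [isWeaklyResolving_iff hsc]
  intro u v hu hv _
  simp_all

lemma card_compl_le_one_of_forall_areTwins (htw : ∀ u v, AreTwins A u v) {S : Finset V}
    (hres : IsWeaklyResolving A ↑S) : Sᶜ.card ≤ 1 :=
  Finset.card_le_one.mpr fun u hu v hv => by
    by_contra hne
    rcases (htw u v).mem_or_mem hres hne with h | h <;> simp_all

end Resolving

section Dimension

variable [Fintype V]

lemma wdim_le_card {S : Finset V} (hres : IsWeaklyResolving A ↑S) : wdim A ≤ S.card :=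
  Nat.sInf_le ⟨S, rfl, hres⟩

lemma le_wdim_iff (hsc : IsStronglyConnected A) {k : ℕ} :
    k ≤ wdim A ↔ ∀ S : Finset V, IsWeaklyResolving A ↑S → k ≤ S.card := by
  refine ⟨fun hk S hres => hk.trans (wdim_le_card hres), fun h => ?_⟩
  have huniv : IsWeaklyResolving A ↑(Finset.univ : Finset V) :=
    (isWeaklyResolving_iff hsc).mpr fun u _ hu => absurd (Finset.mem_univ u) hu
  obtain ⟨S, hcard, hres⟩ := Nat.sInf_mem (s := {k | ∃ S : Finset V, S.card = k ∧
    IsWeaklyResolving A ↑S}) ⟨_, _, rfl, huniv⟩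
  calc k ≤ S.card := h S hres
    _ = wdim A := hcard

lemma wdim_le_card_sub_one (hsc : IsStronglyConnected A) : wdim A ≤ Fintype.card V - 1 := by
  classical
  cases isEmpty_or_nonempty V with
  | inl _ =>
    exact (wdim_le_card (S := ∅) fun u => isEmptyElim u).trans (Nat.zero_le _)
  | inr hne =>
    obtain ⟨x⟩ := hne
    simpa [Finset.card_compl] using wdim_le_card (isWeaklyResolving_compl_singleton hsc x)

theorem wdim_eq_card_sub_one_iff_forall_areTwins (hsc : IsStronglyConnected A) :
    wdim A = Fintype.card V - 1 ↔ ∀ u v, AreTwins A u v := by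
  classical
  constructor
  · intro hdim u v
    by_contra htw
    have hne : u ≠ v := fun huv => htw (huv ▸ fun _ _ _ => rfl)
    have hle := wdim_le_card (isWeaklyResolving_compl_pair hsc htw)
    rw [Finset.card_compl, Finset.card_pair hne] at hle
    have : 2 ≤ Fintype.card V := Finset.card_pair hne ▸ Finset.card_le_univ {u, v}
    omega
  · intro htw
    refine le_antisymm (wdim_le_card_sub_one hsc) ((le_wdim_iff hsc).mpr fun S hres => ?_)
    have := card_compl_le_one_of_forall_areTwins htw hres
    rw [Finset.card_compl] at this
    omega

end Dimension

lemma forall_areTwins_iff (hsc : IsStronglyConnected A) :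
    (∀ u v, AreTwins A u v) ↔ ∀ x y : V, x ≠ y → A x y ∧ A y x := by
  constructor
  · intro htw
    have arc : ∀ a b : V, a ≠ b → A a b := by
      intro a b hab
      obtain ⟨z, haz⟩ := exists_ddist_eq_one (hsc a b) hab
      have hab1 : ddist A a b = 1 := by
        by_cases hzb : z = b
        · exact hzb ▸ haz
        · exact (congrArg Prod.fst (htw z b a (ddist_eq_one_iff.mp haz).2 hab)).symm.trans haz
      exact (ddist_eq_one_iff.mp hab1).1
    exact fun x y hxy => ⟨arc x y hxy, arc y x hxy.symm⟩
  · intro hcomp u v w hwu hwv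
    have one : ∀ x y : V, x ≠ y → ddist A x y = 1 :=
      fun x y hxy => ddist_eq_one_iff.mpr ⟨(hcomp x y hxy).1, hxy⟩
    simp only [twoDist, one w u hwu, one w v hwv, one u w hwu.symm, one v w hwv.symm]

end

theorem wdim_eq_card_sub_one_iff_complete_general {V : Type*} [Fintype V] (A : V → V → Prop)
    (hsc : IsStronglyConnected A)
    (n : ℕ) (hn : Fintype.card V = n) :
    wdim A = n - 1 ↔ ∀ x y : V, x ≠ y → A x y ∧ A y x := by
  rw [← hn, wdim_eq_card_sub_one_iff_forall_areTwins hsc, forall_areTwins_iff hsc]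

/-- Corollary 2.2. For a digraph of order `n ≥ 2`,
`dim(Γ) = n - 1` iff `Γ` is complete. -/
theorem wdim_eq_card_sub_one_iff_complete {V : Type*} [Fintype V] (A : V → V → Prop)
    (hirr : Irreflexive A) (hsc : IsStronglyConnected A)
    (n : ℕ) (hn : Fintype.card V = n) (h2 : 2 ≤ n) :
    wdim A = n - 1 ↔ ∀ x y : V, x ≠ y → A x y ∧ A y x :=
  wdim_eq_card_sub_one_iff_complete_general A hsc n hn
end

section
/- For positive integers n and d with d+1 ≤ n ≤ d² + 1 and d ≥ 2, the digraph Γ(n,d) is strongly connected with diameter d, and dim(Γ(n,d)) = 1 = f(n,d). -/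
/-! Since `n ≤ d² + 1` forces `f(n,d) = 1`, the digraph has one vertex `u` and `m = n - 1 ≤ d²`
vertices `v_j`, with pairwise distinct coordinate pairs `(a_j, b_j) ∈ [1, d]²`. There are arcs
`u → v_j` iff `a_j = 1` and `v_j → u` iff `b_j = 1`, and an arc `v_j → v_l` raises the first
coordinate and lowers the second by at most one. Walking greedily (raise `a`, lower `b`, each
clamped at the target) gives `∂(u, v_j) ≤ a_j`, `∂(v_j, u) ≤ b_j` and
`∂(v_j, v_l) ≤ max(a_l - a_j, b_j - b_l, 1) ≤ d`; the coordinates being `1`-Lipschitz along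
arcs, the first two are equalities. So `u` alone resolves `Γ(n,d)`, and the vertex with
coordinates `(d, 1)`, which exists as `m ≥ d`, is at distance `d` from `u`. -/

section Distances

variable {V : Type*} {A : V → V → Prop}

theorem le_add_of_walkLen {f : V → ℕ} (hf : ∀ x y, A x y → f y ≤ f x + 1) {t : ℕ} {x y : V}
    (h : walkLen A t x y) : f y ≤ f x + t := by
  induction t generalizing x with
  | zero => cases h; omega
  | succ t ih =>
    obtain ⟨z, hxz, hzy⟩ := h
    have := hf x z hxz
    have := ih hzy
    omega

theorem le_add_of_walkLen' {g : V → ℕ} (hg : ∀ x y, A x y → g x ≤ g y + 1) {t : ℕ} {x y : V}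
    (h : walkLen A t x y) : g x ≤ g y + t := by
  induction t generalizing x with
  | zero => cases h; omega
  | succ t ih =>
    obtain ⟨z, hxz, hzy⟩ := h
    have := hg x z hxz
    have := ih hzy
    omega

theorem exists_walkLen_le_of_descent {y : V} (D : V → ℕ)
    (hD : ∀ x, x ≠ y → ∃ z, A x z ∧ D z < D x) (x : V) : ∃ t ≤ D x, walkLen A t x y := by
  induction hx : D x using Nat.strong_induction_on generalizing x with
  | _ k ih =>
    by_cases hxy : x = y
    · exact ⟨0, Nat.zero_le _, hxy⟩
    obtain ⟨z, hxz, hz⟩ := hD x hxy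
    obtain ⟨t, ht, hzy⟩ := ih (D z) (hx ▸ hz) z rfl
    exact ⟨t + 1, by omega, z, hxz, hzy⟩

theorem ddist_le_of_walkLen {t : ℕ} {x y : V} (h : walkLen A t x y) : ddist A x y ≤ t :=
  Nat.sInf_le h

theorem diam_eq_of_forall_ddist_le [Fintype V] {D : ℕ} (hle : ∀ x y, ddist A x y ≤ D)
    {x y : V} (hxy : ddist A x y = D) : diam A = D := by
  have hbdd : ∀ s ∈ {s | ∃ x y : V, ddist A x y = s}, s ≤ D := by
    rintro s ⟨x, y, rfl⟩
    exact hle x y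
  exact le_antisymm (csSup_le ⟨D, x, y, hxy⟩ hbdd) (le_csSup ⟨D, hbdd⟩ ⟨x, y, hxy⟩)

theorem wdim_eq_one [Fintype V] [Nontrivial V] {w : V} (hw : IsWeaklyResolving A {w}) :
    wdim A = 1 := by
  have hone : 1 ∈ {k | ∃ S : Finset V, S.card = k ∧ IsWeaklyResolving A ↑S} :=
    ⟨{w}, Finset.card_singleton w, by simpa using hw⟩
  refine le_antisymm (Nat.sInf_le hone) (Nat.one_le_iff_ne_zero.mpr fun h0 => ?_)
  obtain ⟨S, hS, hres⟩ := Nat.sInf_mem ⟨1, hone⟩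
  rw [← wdim, h0] at hS
  obtain ⟨u, v, huv⟩ := exists_pair_ne V
  exact huv (hres u v (by simp [Finset.card_eq_zero.mp hS]))

end Distances

theorem fnd_eq_one {n d : ℕ} (h : n ≤ d ^ 2 + 1) : fnd n d = 1 := by
  have hone : 1 ∈ {k | 0 < k ∧ n ≤ k + d ^ (2 * k)} := ⟨Nat.one_pos, by rwa [Nat.add_comm]⟩
  exact le_antisymm (Nat.sInf_le hone) (Nat.sInf_mem ⟨1, hone⟩).1

section Coordinates

variable {d a b j l : ℕ}

theorem gcoord_zero : gcoord d j 0 = j % d + 1 := by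
  simp [gcoord]

theorem gcoord_one (hj : j < d ^ 2) : gcoord d j 1 = j / d + 1 := by
  rw [gcoord, pow_one, Nat.mod_eq_of_lt (Nat.div_lt_of_lt_mul (by rwa [← sq]))]

theorem gcoord_pos (r : ℕ) : 0 < gcoord d j r :=
  Nat.succ_pos _

theorem gcoord_le (hd : 0 < d) (r : ℕ) : gcoord d j r ≤ d :=
  Nat.mod_lt _ hd

theorem Nat.eq_iff_gcoord_eq (hj : j < d ^ 2) (hl : l < d ^ 2) :
    j = l ↔ gcoord d j 0 = gcoord d l 0 ∧ gcoord d j 1 = gcoord d l 1 := by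
  rw [gcoord_zero, gcoord_zero, gcoord_one hj, gcoord_one hl, Nat.ext_div_modEq_iff d, and_comm]
  simp only [Nat.ModEq, Nat.add_right_cancel_iff]

theorem gcoord_add_mul (ha : a < d) (hb : b < d) :
    gcoord d (a + d * b) 0 = a + 1 ∧ gcoord d (a + d * b) 1 = b + 1 := by
  have hd : 0 < d := Nat.zero_lt_of_lt ha
  refine ⟨by simp [gcoord_zero, Nat.mod_eq_of_lt ha], ?_⟩
  rw [gcoord_one (by nlinarith), Nat.add_mul_div_left _ _ hd, Nat.div_eq_of_lt ha, Nat.zero_add]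

theorem add_mul_le_of_lt_gcoord (hj : j < d ^ 2) (ha : a < gcoord d j 0) (hb : b < gcoord d j 1) :
    a + d * b ≤ j := by
  rw [gcoord_zero] at ha
  rw [gcoord_one hj] at hb
  have := Nat.mod_add_div j d
  have := Nat.mul_le_mul_left d (Nat.le_of_lt_succ hb)
  omega

theorem add_mul_lt_of_lt_gcoord (hj : j < d ^ 2) (ha : a < d) (hb : b + 1 < gcoord d j 1) :
    a + d * b < j := by
  rw [gcoord_one hj] at hb
  have := Nat.mod_add_div j d
  have := Nat.mul_le_mul_left d (Nat.le_of_lt_succ hb)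
  rw [Nat.mul_succ] at this
  omega

end Coordinates

theorem max_max_sub_clamp_lt {x₀ x₁ y₀ y₁ : ℕ}
    (h : ¬(min (x₀ + 1) y₀ = y₀ ∧ max (x₁ - 1) y₁ = y₁)) :
    max (max (y₀ - min (x₀ + 1) y₀) (max (x₁ - 1) y₁ - y₁)) 1 <
      max (max (y₀ - x₀) (x₁ - y₁)) 1 := by
  omega

/-- The distances of `Γ(n,d)` for `k = 1`: exact from and to `u_1`, an upper bound between
two `v`-vertices. -/
def gammaDist (d : ℕ) {m : ℕ} : Fin 1 ⊕ Fin m → Fin 1 ⊕ Fin m → ℕ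
  | .inl _, .inl _ => 0
  | .inl _, .inr l => gcoord d l 0
  | .inr j, .inl _ => gcoord d j 1
  | .inr j, .inr l =>
    if j = l then 0 else max (max (gcoord d l 0 - gcoord d j 0) (gcoord d j 1 - gcoord d l 1)) 1

section Gamma

variable {d m : ℕ}

local notation "Γ" => gammaArcKM d 1 (m := m)

theorem Fin.lt_sq_of_le (hm : m ≤ d ^ 2) (j : Fin m) : (j : ℕ) < d ^ 2 :=
  j.isLt.trans_le hm

theorem Fin.pos_of_le_sq (hm : m ≤ d ^ 2) (j : Fin m) : 0 < d := by
  rcases Nat.eq_zero_or_pos d with rfl | hd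
  · exact absurd (j.lt_sq_of_le hm) (by simp)
  · exact hd

theorem Fin.eq_iff_gcoord_eq (hm : m ≤ d ^ 2) (j l : Fin m) :
    j = l ↔ gcoord d j 0 = gcoord d l 0 ∧ gcoord d j 1 = gcoord d l 1 :=
  Fin.ext_iff.trans (Nat.eq_iff_gcoord_eq (j.lt_sq_of_le hm) (l.lt_sq_of_le hm))

theorem exists_fin_gcoord (hm : m ≤ d ^ 2) {a b : ℕ} (ha : a < d) (hlt : a + d * b < m) :
    ∃ z : Fin m, gcoord d z 0 = a + 1 ∧ gcoord d z 1 = b + 1 :=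
  ⟨⟨a + d * b, hlt⟩, gcoord_add_mul ha (by nlinarith)⟩

theorem gamma_arc_inl_inr (i : Fin 1) (l : Fin m) : Γ (.inl i) (.inr l) ↔ gcoord d l 0 = 1 := by
  simp [gammaArcKM, Fin.fin_one_eq_zero i]

theorem gamma_arc_inr_inl (j : Fin m) (i : Fin 1) : Γ (.inr j) (.inl i) ↔ gcoord d j 1 = 1 := by
  simp [gammaArcKM, Fin.fin_one_eq_zero i]

theorem gamma_arc_inr_inr (j l : Fin m) :
    Γ (.inr j) (.inr l) ↔
      j ≠ l ∧ gcoord d l 0 ≤ gcoord d j 0 + 1 ∧ gcoord d j 1 ≤ gcoord d l 1 + 1 := by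
  simp [gammaArcKM]

theorem gammaDist_le (hd : 0 < d) (x y : Fin 1 ⊕ Fin m) : gammaDist d x y ≤ d := by
  have hle := fun j r => gcoord_le (j := j) hd r
  rcases x with _ | j <;> rcases y with _ | l <;> simp only [gammaDist]
  · exact Nat.zero_le d
  · exact hle l 0
  · exact hle j 1
  · have := hle l 0
    have := hle j 1
    split_ifs <;> omega

theorem gamma_exists_arc_inl_inr (hm : m ≤ d ^ 2) (i : Fin 1) (l : Fin m) :
    ∃ z, Γ (.inl i) z ∧ gammaDist d z (.inr l) < gammaDist d (.inl i) (.inr l) := by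
  have hl₀ := gcoord_pos (d := d) (j := l) 0
  have hl₁ := gcoord_pos (d := d) (j := l) 1
  obtain ⟨z, hz0, hz1⟩ := exists_fin_gcoord hm (b := gcoord d l 1 - 1) (l.pos_of_le_sq hm)
    ((add_mul_le_of_lt_gcoord (l.lt_sq_of_le hm) hl₀ (by omega)).trans_lt l.isLt)
  have hzl := Fin.eq_iff_gcoord_eq hm z l
  refine ⟨.inr z, (gamma_arc_inl_inr i z).2 hz0, ?_⟩
  simp only [gammaDist]
  split_ifs <;> omega

theorem gamma_exists_arc_inr_inl (hm : m ≤ d ^ 2) (j : Fin m) (i : Fin 1) :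
    ∃ z, Γ (.inr j) z ∧ gammaDist d z (.inl i) < gammaDist d (.inr j) (.inl i) := by
  have hd := j.pos_of_le_sq hm
  have hj := j.lt_sq_of_le hm
  have := gcoord_pos (d := d) (j := j) 1
  by_cases hj1 : gcoord d j 1 = 1
  · exact ⟨.inl i, (gamma_arc_inr_inl j i).2 hj1, by simp [gammaDist, hj1]⟩
  obtain ⟨z, hz0, hz1⟩ := exists_fin_gcoord hm (b := gcoord d j 1 - 2) hd
    ((add_mul_lt_of_lt_gcoord hj hd (by omega)).trans j.isLt)
  refine ⟨.inr z, (gamma_arc_inr_inr j z).2 ⟨?_, by omega, by omega⟩, ?_⟩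
  · rw [Ne, Fin.eq_iff_gcoord_eq hm]
    omega
  · simp only [gammaDist]
    omega

/-- From `v_j`, move the first coordinate up and the second down by one, each stopping at the
coordinate of `v_l`. -/
theorem gamma_exists_arc_inr_inr (hm : m ≤ d ^ 2) {j l : Fin m} (hjl : j ≠ l) :
    ∃ z, Γ (.inr j) z ∧ gammaDist d z (.inr l) < gammaDist d (.inr j) (.inr l) := by
  have hd := j.pos_of_le_sq hm
  obtain ⟨z, hz0, hz1⟩ : ∃ z : Fin m, gcoord d z 0 = min (gcoord d j 0 + 1) (gcoord d l 0) ∧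
      gcoord d z 1 = max (gcoord d j 1 - 1) (gcoord d l 1) := by
    have := gcoord_pos (d := d) (j := l) 0
    have := gcoord_pos (d := d) (j := l) 1
    have := gcoord_le (j := l) hd 0
    have hlt : min (gcoord d j 0) (gcoord d l 0 - 1) + d * max (gcoord d j 1 - 2) (gcoord d l 1 - 1)
        < m := by
      by_cases hjl1 : gcoord d l 1 + 1 < gcoord d j 1
      · exact (add_mul_lt_of_lt_gcoord (j.lt_sq_of_le hm) (by omega) (by omega)).trans j.isLt
      · exact (add_mul_le_of_lt_gcoord (l.lt_sq_of_le hm) (by omega) (by omega)).trans_lt l.isLt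
    obtain ⟨z, hz0, hz1⟩ := exists_fin_gcoord hm (by omega) hlt
    exact ⟨z, by omega, by omega⟩
  have hzj : z ≠ j := by
    have := (Fin.eq_iff_gcoord_eq hm j l).not.1 hjl
    rw [Ne, Fin.eq_iff_gcoord_eq hm, hz0, hz1]
    omega
  refine ⟨.inr z, (gamma_arc_inr_inr j z).2 ⟨hzj.symm, by omega, by omega⟩, ?_⟩
  simp only [gammaDist, if_neg hjl, hz0, hz1]
  split_ifs with hzl
  · omega
  · rw [Fin.eq_iff_gcoord_eq hm, hz0, hz1] at hzl
    exact max_max_sub_clamp_lt hzl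

theorem gamma_exists_arc_gammaDist_lt (hm : m ≤ d ^ 2) {x y : Fin 1 ⊕ Fin m} (hxy : x ≠ y) :
    ∃ z, Γ x z ∧ gammaDist d z y < gammaDist d x y := by
  rcases x with i | j <;> rcases y with i' | l
  · exact absurd (congrArg Sum.inl (Subsingleton.elim i i')) hxy
  · exact gamma_exists_arc_inl_inr hm i l
  · exact gamma_exists_arc_inr_inl hm j i'
  · exact gamma_exists_arc_inr_inr hm (fun h => hxy (congrArg Sum.inr h))

theorem gamma_exists_walkLen_le (hm : m ≤ d ^ 2) (x y : Fin 1 ⊕ Fin m) :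
    ∃ t ≤ gammaDist d x y, walkLen Γ t x y :=
  exists_walkLen_le_of_descent (gammaDist d · y) (fun _ => gamma_exists_arc_gammaDist_lt hm) x

theorem gamma_isStronglyConnected (hm : m ≤ d ^ 2) : IsStronglyConnected Γ := fun x y =>
  let ⟨t, _, h⟩ := gamma_exists_walkLen_le hm x y
  ⟨t, h⟩

theorem gamma_ddist_le (hm : m ≤ d ^ 2) (x y : Fin 1 ⊕ Fin m) : ddist Γ x y ≤ gammaDist d x y :=
  let ⟨_, ht, h⟩ := gamma_exists_walkLen_le hm x y
  (ddist_le_of_walkLen h).trans ht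

theorem gammaDist_inl_left_le_of_arc {x y : Fin 1 ⊕ Fin m} (h : Γ x y) (i : Fin 1) :
    gammaDist d (.inl i) y ≤ gammaDist d (.inl i) x + 1 := by
  rcases x with i' | j <;> rcases y with i'' | l
  · exact h.elim
  · simp [gammaDist, (gamma_arc_inl_inr i' l).1 h]
  · simp [gammaDist]
  · simp only [gammaDist]
    exact ((gamma_arc_inr_inr j l).1 h).2.1

theorem gammaDist_inl_right_le_of_arc {x y : Fin 1 ⊕ Fin m} (h : Γ x y) (i : Fin 1) :
    gammaDist d x (.inl i) ≤ gammaDist d y (.inl i) + 1 := by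
  rcases x with i' | j <;> rcases y with i'' | l
  · exact h.elim
  · simp [gammaDist]
  · simp [gammaDist, (gamma_arc_inr_inl j i'').1 h]
  · simp only [gammaDist]
    exact ((gamma_arc_inr_inr j l).1 h).2.2

theorem gamma_ddist_inl_left (hm : m ≤ d ^ 2) (i : Fin 1) (y : Fin 1 ⊕ Fin m) :
    ddist Γ (.inl i) y = gammaDist d (.inl i) y := by
  obtain ⟨t, ht, h⟩ := gamma_exists_walkLen_le hm (.inl i) y
  refine le_antisymm ((ddist_le_of_walkLen h).trans ht) (le_csInf ⟨t, h⟩ fun s hs => ?_)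
  simpa [gammaDist] using
    le_add_of_walkLen (A := Γ) (fun _ _ hxy => gammaDist_inl_left_le_of_arc hxy i) hs

theorem gamma_ddist_inl_right (hm : m ≤ d ^ 2) (x : Fin 1 ⊕ Fin m) (i : Fin 1) :
    ddist Γ x (.inl i) = gammaDist d x (.inl i) := by
  obtain ⟨t, ht, h⟩ := gamma_exists_walkLen_le hm x (.inl i)
  refine le_antisymm ((ddist_le_of_walkLen h).trans ht) (le_csInf ⟨t, h⟩ fun s hs => ?_)
  simpa [gammaDist] using
    le_add_of_walkLen' (A := Γ) (fun _ _ hxy => gammaDist_inl_right_le_of_arc hxy i) hs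

theorem gamma_diam (hd : 0 < d) (hdm : d ≤ m) (hm : m ≤ d ^ 2) : diam Γ = d := by
  obtain ⟨l, hl0, -⟩ := exists_fin_gcoord (b := 0) hm (Nat.sub_lt hd Nat.one_pos) (by omega)
  refine diam_eq_of_forall_ddist_le (fun x y => (gamma_ddist_le hm x y).trans (gammaDist_le hd x y))
    (x := .inl 0) (y := .inr l) ?_
  rw [gamma_ddist_inl_left hm, gammaDist, hl0]
  omega

theorem gamma_isWeaklyResolving (hm : m ≤ d ^ 2) : IsWeaklyResolving Γ {.inl 0} := by
  intro x y h
  obtain ⟨hfrom, hto⟩ := Prod.ext_iff.1 (h (.inl 0) rfl)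
  simp only [twoDist, gamma_ddist_inl_left hm, gamma_ddist_inl_right hm] at hfrom hto
  rcases x with i | j <;> rcases y with i' | l
  · exact congrArg Sum.inl (Subsingleton.elim i i')
  · exact absurd hfrom (by simp [gammaDist, (gcoord_pos (d := d) (j := l) 0).ne])
  · exact absurd hfrom (by simp [gammaDist, (gcoord_pos (d := d) (j := j) 0).ne'])
  · simp only [gammaDist] at hfrom hto
    exact congrArg Sum.inr ((Fin.eq_iff_gcoord_eq hm j l).2 ⟨hfrom, hto⟩)

theorem gamma_wdim (hm0 : 0 < m) (hm : m ≤ d ^ 2) : wdim Γ = 1 :=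
  haveI : Nontrivial (Fin 1 ⊕ Fin m) := ⟨⟨.inl 0, .inr ⟨0, hm0⟩, Sum.inl_ne_inr⟩⟩
  wdim_eq_one (gamma_isWeaklyResolving hm)

end Gamma

/-- Lemma 2.5(i). For `d + 1 ≤ n ≤ d² + 1` and `d ≥ 2`, the digraph
`Γ(n,d)` is strongly connected with diameter `d` and `dim(Γ(n,d)) = 1 = f(n,d)`. -/
theorem gamma_nd_dim_one (n d : ℕ) (hd : 2 ≤ d) (h1 : d + 1 ≤ n) (h2 : n ≤ d ^ 2 + 1) :
    IsStronglyConnected (gammaArcKM d (fnd n d) (m := n - fnd n d)) ∧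
    diam (gammaArcKM d (fnd n d) (m := n - fnd n d)) = d ∧
    wdim (gammaArcKM d (fnd n d) (m := n - fnd n d)) = 1 ∧ fnd n d = 1 := by
  rw [fnd_eq_one h2]
  have hm : n - 1 ≤ d ^ 2 := by omega
  exact ⟨gamma_isStronglyConnected hm, gamma_diam (by omega) (by omega) hm,
    gamma_wdim (by omega) hm, rfl⟩
end

section
/- Let k and d be positive integers with d ≥ 2, and let e(k,d) denote the number of arcs of family (F3) in the digraph Γ(d^(2k)+k, d), i.e., the number of arcs between vertices v_j. Then e(k,d) = ((d² + 3d − 2)/2)^(2k) − d^(2k). -/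
/-! Through the base-`d` digits `finFunctionFinEquiv.symm`, the `v`-vertices of `Γ(d^(2k)+k, d)`
are the tuples in `{1,…,d}^(2k)`, and dropping `j ≠ l` from (F3) leaves a relation that is a
product of one relation per coordinate. Each of these holds for `(d²+3d-2)/2` of the `d²` pairs
of coordinate values (up to a swap, the pairs `(a, b)` with `b ≤ a + 1`, i.e. `Σ_a min (a+2) d`).
So the relaxed relation has `((d²+3d-2)/2)^(2k)` pairs, and it contains the `d^(2k)` loops that
`j ≠ l` removes. -/

open Finset

lemma fnd_pow_add_self {k d : ℕ} (hk : 0 < k) (hd : 0 < d) :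
    fnd (d ^ (2 * k) + k) d = k := by
  refine le_antisymm (Nat.sInf_le ⟨hk, (add_comm _ _).le⟩)
    (le_csInf ⟨k, hk, (add_comm _ _).le⟩ ?_)
  rintro b ⟨-, hb⟩
  by_contra! hbk
  have : d ^ (2 * b) ≤ d ^ (2 * k) := Nat.pow_le_pow_right hd (by omega)
  omega

lemma sum_range_min_add_two (d : ℕ) :
    ∑ x ∈ range d, min (x + 2) d = (d ^ 2 + 3 * d - 2) / 2 := by
  rcases d with _ | e
  · rfl
  have hmin : ∑ x ∈ range e, min (x + 2) (e + 1) = ∑ x ∈ range e, x + 2 * e := by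
    rw [sum_congr rfl fun x hx => min_eq_left (by simp at hx; omega), sum_add_distrib]
    simp [mul_comm]
  have hgauss := sum_range_id_mul_two e
  have hsq : (e + 1) ^ 2 = e * e + 2 * e + 1 := by ring
  have : e * (e - 1) + e = e * e := by cases e <;> simp [Nat.mul_succ]
  rw [sum_range_succ, hmin, min_eq_right (by omega)]
  omega

lemma card_le_add_one_pairs (d : ℕ) :
    Nat.card {q : Fin d × Fin d // (q.2 : ℕ) ≤ q.1 + 1} = (d ^ 2 + 3 * d - 2) / 2 := by
  have hrow (x : Fin d) : Nat.card {y : Fin d // (y : ℕ) ≤ x + 1} = min ((x : ℕ) + 2) d := by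
    rw [Nat.card_eq_fintype_card, Fintype.card_subtype,
      filter_congr fun y _ => Nat.lt_succ_iff.symm, Fin.card_filter_val_lt, min_comm]
  rw [Nat.card_congr (Equiv.subtypeProdEquivSigmaSubtype fun x y : Fin d => (y : ℕ) ≤ x + 1),
    Nat.card_sigma]
  simp_rw [hrow]
  rw [Fin.sum_univ_eq_sum_range (fun x => min (x + 2) d), sum_range_min_add_two]

lemma forall_lt_two_mul_iff {k : ℕ} {P : ℕ → Prop} :
    (∀ s < 2 * k, P s) ↔ ∀ r < k, P (2 * r) ∧ P (2 * r + 1) := by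
  refine ⟨fun h r hr => ⟨h _ (by omega), h _ (by omega)⟩, fun h s hs => ?_⟩
  obtain ⟨r, rfl | rfl⟩ := Nat.even_or_odd' s
  exacts [(h r (by omega)).1, (h r (by omega)).2]

/-- The condition that (F3) puts on the `s`-th coordinates `a` of the tail and `b` of the head
of an arc, `s` counted from `0`. -/
def F3CoordRel (s a b : ℕ) : Prop :=
  if Even s then b ≤ a + 1 else a ≤ b + 1

lemma F3CoordRel_refl (s a : ℕ) : F3CoordRel s a a := by
  unfold F3CoordRel; split_ifs <;> omega

lemma F3CoordRel_add_one_iff {s a b : ℕ} : F3CoordRel s (a + 1) (b + 1) ↔ F3CoordRel s a b := by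
  unfold F3CoordRel; split_ifs <;> omega

lemma gammaArcKM_inr_inr_iff {d k m : ℕ} (j l : Fin m) :
    gammaArcKM d k (.inr j) (.inr l) ↔
      j ≠ l ∧ ∀ s < 2 * k, F3CoordRel s (gcoord d j s) (gcoord d l s) := by
  simp [gammaArcKM, forall_lt_two_mul_iff, F3CoordRel]

lemma gammaArcKM_inr_inr_iff_digits {d k : ℕ} (j l : Fin (d ^ (2 * k))) :
    gammaArcKM d k (.inr j) (.inr l) ↔ j ≠ l ∧ ∀ s : Fin (2 * k),
      F3CoordRel s (finFunctionFinEquiv.symm j s) (finFunctionFinEquiv.symm l s) := by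
  rw [gammaArcKM_inr_inr_iff, Fin.forall_iff]
  simp only [gcoord, F3CoordRel_add_one_iff]
  rfl

lemma card_F3CoordRel (d s : ℕ) :
    Nat.card {q : Fin d × Fin d // F3CoordRel s q.1 q.2} = (d ^ 2 + 3 * d - 2) / 2 := by
  rw [← card_le_add_one_pairs d]
  by_cases hs : Even s
  · exact Nat.card_congr (Equiv.subtypeEquivRight fun q => by simp [F3CoordRel, hs])
  · exact Nat.card_congr <| (Equiv.prodComm _ _).subtypeEquiv fun q => by simp [F3CoordRel, hs]

lemma card_digitwise_rel (d n : ℕ) (R : Fin n → Fin d → Fin d → Prop) :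
    Nat.card {p : Fin (d ^ n) × Fin (d ^ n) //
        ∀ s, R s (finFunctionFinEquiv.symm p.1 s) (finFunctionFinEquiv.symm p.2 s)} =
      ∏ s, Nat.card {q : Fin d × Fin d // R s q.1 q.2} := by
  let digits : Fin (d ^ n) × Fin (d ^ n) ≃ (Fin n → Fin d × Fin d) :=
    (finFunctionFinEquiv.symm.prodCongr finFunctionFinEquiv.symm).trans
      (Equiv.arrowProdEquivProdArrow _ _ _).symm
  let e := (digits.subtypeEquiv (q := fun f => ∀ s, R s (f s).1 (f s).2) fun _ => Iff.rfl).trans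
    (Equiv.subtypePiEquivPi (p := fun s (q : Fin d × Fin d) => R s q.1 q.2))
  exact (Nat.card_congr e).trans Nat.card_pi

lemma ncard_diagonal (α : Type*) : {p : α × α | p.1 = p.2}.ncard = Nat.card α := by
  rw [← Set.ncard_range_of_injective (f := fun x : α => (x, x)) fun _ _ h => congrArg Prod.fst h]
  congr
  ext ⟨a, b⟩
  simp [eq_comm]

/-- Lemma 2.7. The number `e(k,d)` of arcs of family (F3) in
`Γ(d^(2k)+k, d)` equals `((d²+3d-2)/2)^(2k) - d^(2k)`. -/
theorem count_F3_arcs (k d : ℕ) (hk : 0 < k) (hd : 2 ≤ d) :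
    Set.ncard {p : Fin (d ^ (2 * k) + k - fnd (d ^ (2 * k) + k) d) ×
                   Fin (d ^ (2 * k) + k - fnd (d ^ (2 * k) + k) d) |
        gammaArcKM d (fnd (d ^ (2 * k) + k) d) (Sum.inr p.1) (Sum.inr p.2)} =
      ((d ^ 2 + 3 * d - 2) / 2) ^ (2 * k) - d ^ (2 * k) := by
  rw [fnd_pow_add_self hk (by omega), Nat.add_sub_cancel]
  set related := {p : Fin (d ^ (2 * k)) × Fin (d ^ (2 * k)) | ∀ s : Fin (2 * k),
    F3CoordRel s (finFunctionFinEquiv.symm p.1 s) (finFunctionFinEquiv.symm p.2 s)}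
  have harcs : {p : Fin (d ^ (2 * k)) × Fin (d ^ (2 * k)) |
      gammaArcKM d k (.inr p.1) (.inr p.2)} = related \ {p | p.1 = p.2} := by
    ext p
    simp [related, gammaArcKM_inr_inr_iff_digits, and_comm]
  have hdiag : {p : Fin (d ^ (2 * k)) × Fin (d ^ (2 * k)) | p.1 = p.2} ⊆ related := by
    rintro ⟨j, l⟩ (rfl : j = l) s
    exact F3CoordRel_refl _ _
  have hrelated : Nat.card related = ((d ^ 2 + 3 * d - 2) / 2) ^ (2 * k) := by
    rw [Set.coe_ofPred, card_digitwise_rel d (2 * k) fun s a b => F3CoordRel s a b]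
    simp [card_F3CoordRel]
  rw [harcs, Set.ncard_sdiff hdiag, ncard_diagonal, Nat.card_fin, ← Nat.card_coe_set_eq,
    hrelated]
end
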